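/- arXiv:2012.13892 — 4 statements merged into one kernel-verified Lean document; each statement's English description precedes it below -/
import Mathlib

section
/- Let g₁ ≤ g₂ ≤ … ≤ g_n be real numbers, 1 ≤ k < n, and set β = (k g_{k+1} − Σ_{h=1}^k g_h)/2, assuming β > 0. Then the vector s with sⱼ = (g_{k+1} − gⱼ)/(k g_{k+1} − Σ_{h=1}^k g_h) for j ≤ k and sⱼ = 0 for j > k lies on the probability simplex (sⱼ ≥ 0, Σⱼ sⱼ = 1) and has exactly k nonzero entries when g_k < g_{k+1}. -/
open BigOperators Finset

/-- For sorted values `g 0 ≤ g 1 ≤ …` (zero-based, so `g (k)` is the `(k+1)`-th value) and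
`β = (k·g k − Σ_{h<k} g h)/2 > 0`, the vector
`sⱼ = (g k − g j)/(k·g k − Σ_{h<k} g h)` for `j < k`, `sⱼ = 0` otherwise,
lies on the probability simplex and has exactly `k` nonzero entries when `g (k−1) < g k`. -/
theorem sparse_simplex_solution {n : ℕ} (g : ℕ → ℝ) (hg : Monotone g)
    (k : ℕ) (hk1 : 1 ≤ k) (hkn : k < n)
    (β : ℝ) (hβdef : β = ((k : ℝ) * g k - ∑ h ∈ Finset.range k, g h) / 2)
    (hβ : 0 < β)
    (s : Fin n → ℝ)
    (hs : ∀ j : Fin n, s j =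
      if (j : ℕ) < k then (g k - g j) / ((k : ℝ) * g k - ∑ h ∈ Finset.range k, g h)
      else 0) :
    (∀ j, 0 ≤ s j) ∧ (∑ j, s j) = 1 ∧
      (g (k - 1) < g k →
        (Finset.univ.filter fun j : Fin n => s j ≠ 0).card = k) := by
  set D : ℝ := (k : ℝ) * g k - ∑ h ∈ Finset.range k, g h with hD
  have hDpos : 0 < D := by
    have : D = 2 * β := by rw [hβdef]; ring
    linarith
  refine ⟨?_, ?_, ?_⟩
  · intro j
    rw [hs j]
    split_ifs with h
    · exact div_nonneg (sub_nonneg.mpr (hg h.le)) hDpos.le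
    · exact le_refl 0
  · have hsum : ∑ j, s j = ∑ j ∈ Finset.range n,
        (if j < k then (g k - g j) / D else 0) := by
      rw [← Fin.sum_univ_eq_sum_range]
      exact Finset.sum_congr rfl (fun j _ => hs j)
    rw [hsum]
    rw [← Finset.sum_subset (Finset.range_subset_range.mpr hkn.le)
      (fun x _ hx => by simp [Finset.mem_range.not.mp hx |> Nat.le_of_not_lt |> Nat.not_lt_of_le])]
    have : ∑ j ∈ Finset.range k, (if j < k then (g k - g j) / D else 0)
        = ∑ j ∈ Finset.range k, (g k - g j) / D := by
      apply Finset.sum_congr rfl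
      intro j hj
      simp [Finset.mem_range.mp hj]
    rw [this, ← Finset.sum_div, Finset.sum_sub_distrib, Finset.sum_const,
      Finset.card_range, nsmul_eq_mul]
    rw [show (k:ℝ) * g k - ∑ j ∈ Finset.range k, g j = D from rfl]
    exact div_self hDpos.ne'
  · intro hlt
    have hset : (Finset.univ.filter fun j : Fin n => s j ≠ 0) =
        (Finset.univ.filter fun j : Fin n => (j : ℕ) < k) := by
      ext j
      simp only [Finset.mem_filter, Finset.mem_univ, true_and, hs j]
      constructor
      · intro h
        by_contra hc
        simp [hc] at h
      · intro h
        simp only [h, if_true]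
        have hgj : g j < g k := lt_of_le_of_lt (hg (Nat.le_pred_of_lt h)) hlt
        exact div_ne_zero (by linarith) hDpos.ne'
    rw [hset]
    have : (Finset.univ.filter fun j : Fin n => (j : ℕ) < k)
        = Finset.Iio (⟨k, hkn⟩ : Fin n) := by
      ext j; simp [Fin.lt_def]
    rw [this, Fin.card_Iio]
end

section
/- Let Q ∈ ℝ^{n×n} be symmetric and ν > λ_max(Q). Then Q̃ = νI − Q is symmetric positive definite, and for matrices F₁, F₂ ∈ ℝ^{n×c} with F₁ᵀF₁ = F₂ᵀF₂ = I, if Tr(F₂ᵀ Q̃ F₁ + F₂ᵀC) ≥ Tr(F₁ᵀ Q̃ F₁ + F₁ᵀC), then 2Tr(F₂ᵀC) − Tr(F₂ᵀQF₂) ≥ 2Tr(F₁ᵀC) − Tr(F₁ᵀQF₁). -/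
/-! Since every eigenvalue of `Q` is below `ν`, the matrix `Q̃ = ν • 1 - Q` is positive definite, so
`Tr((F₂ - F₁)ᵀ Q̃ (F₂ - F₁)) ≥ 0`, i.e. `2 Tr(F₂ᵀ Q̃ F₁) ≤ Tr(F₁ᵀ Q̃ F₁) + Tr(F₂ᵀ Q̃ F₂)`.
For column-orthonormal `F` one has `Tr(Fᵀ Q̃ F) = ν c - Tr(Fᵀ Q F)`, and adding the hypothesis turns
this inequality into the claimed one. -/

open Matrix

open scoped ComplexOrder in
lemma Matrix.IsHermitian.posDef_smul_one_sub {𝕜 n : Type*} [RCLike 𝕜] [Fintype n]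
    [DecidableEq n] {A : Matrix n n 𝕜} (hA : A.IsHermitian) {ν : ℝ}
    (hν : ∀ i, hA.eigenvalues i < ν) : (ν • (1 : Matrix n n 𝕜) - A).PosDef := by
  have hdiag : ν • (1 : Matrix n n 𝕜) - A = Unitary.conjStarAlgAut 𝕜 _ hA.eigenvectorUnitary
      (diagonal fun i ↦ ((ν - hA.eigenvalues i : ℝ) : 𝕜)) := by
    conv_lhs => rw [hA.spectral_theorem]
    rw [RCLike.real_smul_eq_coe_smul (K := 𝕜),
      ← map_one (Unitary.conjStarAlgAut 𝕜 _ hA.eigenvectorUnitary), ← map_smul, ← map_sub]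
    congr 1
    ext i j
    rcases eq_or_ne i j with rfl | hij <;> simp [*, RCLike.real_smul_eq_coe_mul]
  rw [hdiag, Unitary.conjStarAlgAut_apply, Unitary.isUnit_coe.posDef_star_right_conjugate_iff,
    posDef_diagonal_iff]
  exact fun i ↦ by simpa using hν i

section Real

variable {m k : Type*} [Fintype m] [Fintype k]

lemma Matrix.PosSemidef.trace_transpose_mul_mul_nonneg {T : Matrix m m ℝ} (hT : T.PosSemidef)
    (G : Matrix m k ℝ) : 0 ≤ trace (Gᵀ * T * G) := by
  simpa [conjTranspose_eq_transpose_of_trivial] using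
    (hT.conjTranspose_mul_mul_same G).trace_nonneg

lemma Matrix.IsSymm.trace_transpose_mul_mul_comm {T : Matrix m m ℝ} (hT : T.IsSymm)
    (F₁ F₂ : Matrix m k ℝ) : trace (F₁ᵀ * T * F₂) = trace (F₂ᵀ * T * F₁) := by
  rw [← trace_transpose, transpose_mul, transpose_mul, transpose_transpose, hT.eq,
    Matrix.mul_assoc]

lemma Matrix.PosSemidef.two_mul_trace_transpose_mul_mul_le {T : Matrix m m ℝ}
    (hT : T.PosSemidef) (F₁ F₂ : Matrix m k ℝ) :
    2 * trace (F₂ᵀ * T * F₁) ≤ trace (F₁ᵀ * T * F₁) + trace (F₂ᵀ * T * F₂) := by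
  have hsymm : T.IsSymm := isHermitian_iff_isSymm.mp hT.isHermitian
  have hexpand : (F₂ - F₁)ᵀ * T * (F₂ - F₁)
      = F₂ᵀ * T * F₂ - F₂ᵀ * T * F₁ - F₁ᵀ * T * F₂ + F₁ᵀ * T * F₁ := by
    simp only [transpose_sub, Matrix.sub_mul, Matrix.mul_sub]
    abel
  have hnonneg := hT.trace_transpose_mul_mul_nonneg (F₂ - F₁)
  rw [hexpand, trace_add, trace_sub, trace_sub, hsymm.trace_transpose_mul_mul_comm F₁ F₂]
    at hnonneg
  linarith

lemma Matrix.trace_transpose_mul_smul_one_sub_mul [DecidableEq m] [DecidableEq k]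
    {F : Matrix m k ℝ} (hF : Fᵀ * F = 1) (ν : ℝ) (Q : Matrix m m ℝ) :
    trace (Fᵀ * (ν • 1 - Q) * F) = ν * Fintype.card k - trace (Fᵀ * Q * F) := by
  rw [Matrix.mul_sub, Matrix.sub_mul, Matrix.mul_smul, Matrix.smul_mul, Matrix.mul_one, hF,
    trace_sub, trace_smul, trace_one, smul_eq_mul]

end Real

/-- Monotonicity step of the generalized power iteration: for symmetric `Q` with
`ν > λ_max(Q)`, `Q̃ = νI − Q` is positive definite, and for column-orthonormal `F₁, F₂`,
`Tr(F₂ᵀQ̃F₁ + F₂ᵀC) ≥ Tr(F₁ᵀQ̃F₁ + F₁ᵀC)` implies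
`2Tr(F₂ᵀC) − Tr(F₂ᵀQF₂) ≥ 2Tr(F₁ᵀC) − Tr(F₁ᵀQF₁)`. -/
theorem power_iteration_monotone {n c : ℕ}
    (Q : Matrix (Fin n) (Fin n) ℝ) (hQ : Q.IsHermitian)
    (ν : ℝ) (hν : ∀ i, hQ.eigenvalues i < ν)
    (C : Matrix (Fin n) (Fin c) ℝ) :
    (ν • (1 : Matrix (Fin n) (Fin n) ℝ) - Q).PosDef ∧
      ∀ F₁ F₂ : Matrix (Fin n) (Fin c) ℝ,
        F₁ᵀ * F₁ = 1 → F₂ᵀ * F₂ = 1 →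
        Matrix.trace (F₁ᵀ * (ν • (1 : Matrix (Fin n) (Fin n) ℝ) - Q) * F₁ + F₁ᵀ * C) ≤
          Matrix.trace (F₂ᵀ * (ν • (1 : Matrix (Fin n) (Fin n) ℝ) - Q) * F₁ + F₂ᵀ * C) →
        2 * Matrix.trace (F₁ᵀ * C) - Matrix.trace (F₁ᵀ * Q * F₁) ≤
          2 * Matrix.trace (F₂ᵀ * C) - Matrix.trace (F₂ᵀ * Q * F₂) := by
  have hpd := hQ.posDef_smul_one_sub hν
  refine ⟨hpd, fun F₁ F₂ h₁ h₂ h ↦ ?_⟩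
  have hcross := hpd.posSemidef.two_mul_trace_transpose_mul_mul_le F₁ F₂
  have hF₁ := trace_transpose_mul_smul_one_sub_mul h₁ ν Q
  have hF₂ := trace_transpose_mul_smul_one_sub_mul h₂ ν Q
  rw [trace_add, trace_add] at h
  linarith
end

section
/- Let W_t, W_{t+1} ∈ ℝ^{d×c} have all rows nonzero, and let D_t be the diagonal matrix with entries 1/(2‖w_t^i‖₂) where w_t^i is the i-th row of W_t. Then ‖W_{t+1}‖_{2,1} − Tr(W_{t+1}ᵀ D_t W_{t+1}) ≤ ‖W_t‖_{2,1} − Tr(W_tᵀ D_t W_t), where ‖W‖_{2,1} = Σᵢ ‖w^i‖₂. -/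
open Matrix BigOperators Finset

lemma trace_diag {d c : ℕ} (W : Matrix (Fin d) (Fin c) ℝ) (f : Fin d → ℝ) :
    Matrix.trace (Wᵀ * Matrix.diagonal f * W) = ∑ i : Fin d, f i * ∑ j : Fin c, (W i j)^2 := by
  simp only [Matrix.trace, Matrix.diag, Matrix.mul_apply, Matrix.transpose_apply,
    Matrix.diagonal_apply]
  rw [Finset.sum_comm]
  refine Finset.sum_congr rfl fun i _ => ?_
  rw [Finset.mul_sum]
  refine Finset.sum_congr rfl fun k _ => ?_
  rw [Finset.sum_eq_single i (fun x _ hx => by simp [hx]) (by simp)]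
  simp
  ring

lemma key (a b : ℝ) (ha : 0 ≤ a) (hb : 0 < b) :
    Real.sqrt a - a / (2 * Real.sqrt b) ≤ Real.sqrt b - b / (2 * Real.sqrt b) := by
  have hsb : 0 < Real.sqrt b := Real.sqrt_pos.mpr hb
  have h1 : Real.sqrt b * Real.sqrt b = b := Real.mul_self_sqrt hb.le
  have h2 : Real.sqrt a * Real.sqrt a = a := Real.mul_self_sqrt ha
  rw [← sub_nonneg]
  have : Real.sqrt b - b / (2 * Real.sqrt b) - (Real.sqrt a - a / (2 * Real.sqrt b))
      = (Real.sqrt a - Real.sqrt b)^2 / (2 * Real.sqrt b) := by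
    field_simp
    ring_nf
    nlinarith [h1, h2]
  rw [this]
  positivity

/-- Summing the key vector inequality over rows: with `D_t = diag(1/(2‖w_t^i‖₂))`,
`‖W_{t+1}‖_{2,1} − Tr(W_{t+1}ᵀ D_t W_{t+1}) ≤ ‖W_t‖_{2,1} − Tr(W_tᵀ D_t W_t)`. -/
theorem l21_reweighted_inequality {d c : ℕ}
    (Wt Wt1 : Matrix (Fin d) (Fin c) ℝ)
    (hWt : ∀ i, ∃ j, Wt i j ≠ 0) (hWt1 : ∀ i, ∃ j, Wt1 i j ≠ 0)
    (Dt : Matrix (Fin d) (Fin d) ℝ)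
    (hDt : Dt = Matrix.diagonal fun i =>
      1 / (2 * Real.sqrt (∑ j : Fin c, (Wt i j) ^ 2))) :
    (∑ i : Fin d, Real.sqrt (∑ j : Fin c, (Wt1 i j) ^ 2)) -
        Matrix.trace (Wt1ᵀ * Dt * Wt1) ≤
      (∑ i : Fin d, Real.sqrt (∑ j : Fin c, (Wt i j) ^ 2)) -
        Matrix.trace (Wtᵀ * Dt * Wt) := by
  subst hDt
  rw [trace_diag, trace_diag, ← Finset.sum_sub_distrib, ← Finset.sum_sub_distrib]
  apply Finset.sum_le_sum
  intro i _
  obtain ⟨j, hj⟩ := hWt i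
  have hb : 0 < ∑ j : Fin c, (Wt i j)^2 :=
    Finset.sum_pos' (fun k _ => sq_nonneg _) ⟨j, Finset.mem_univ j, by positivity⟩
  have ha : 0 ≤ ∑ j : Fin c, (Wt1 i j)^2 := Finset.sum_nonneg fun k _ => sq_nonneg _
  have hkey := key _ _ ha hb
  simp only [one_div, div_eq_mul_inv] at *
  linarith [hkey]
end

section
/- Suppose for all matrices W satisfying the update constraint: J(W_{t+1}, D_t) ≤ J(W_t, D_t), where J(W, D) = ‖H(XᵀW − F)‖_F² + λ Tr(Wᵀ D W) + α Tr(Wᵀ X L Xᵀ W) and D_t = diag(1/(2‖w_t^i‖₂)). Then the objective Φ(W) = ‖H(XᵀW − F)‖_F² + λ‖W‖_{2,1} + α Tr(Wᵀ X L Xᵀ W) satisfies Φ(W_{t+1}) ≤ Φ(W_t), i.e., the iterative reweighted algorithm monotonically decreases the ℓ_{2,1}-regularized objective. -/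
open Matrix BigOperators Finset

theorem Matrix.trace_transpose_mul_diagonal_mul {m k R : Type*} [Fintype m] [Fintype k]
    [DecidableEq m] [CommSemiring R] (f : m → R) (W : Matrix m k R) :
    trace (Wᵀ * diagonal f * W) = ∑ i, f i * ∑ j, W i j ^ 2 := by
  simp only [trace, diag, mul_apply, transpose_apply, diagonal_apply, mul_ite, mul_zero,
    Finset.sum_ite_eq', Finset.mem_univ, if_true, Finset.mul_sum]
  rw [Finset.sum_comm]
  exact Finset.sum_congr rfl fun i _ => Finset.sum_congr rfl fun j _ => by ring

/-- The tangent-line bound `√s ≤ √t + (s - t) / (2√t)` for the concave function `√·`. -/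
theorem Real.sqrt_sub_div_two_mul_sqrt_le {s t : ℝ} (hs : 0 ≤ s) (ht : 0 < t) :
    √s - s / (2 * √t) ≤ √t - t / (2 * √t) := by
  have ha : 0 < √t := Real.sqrt_pos.mpr ht
  have hgap : √t - t / (2 * √t) - (√s - s / (2 * √t)) = (√t - √s) ^ 2 / (2 * √t) := by
    field_simp
    linear_combination Real.sq_sqrt ht.le - Real.sq_sqrt hs
  linarith [div_nonneg (sq_nonneg (√t - √s)) (by positivity : (0 : ℝ) ≤ 2 * √t)]

theorem sum_sqrt_sub_trace_reweighted_le {m k : Type*} [Fintype m] [Fintype k] [DecidableEq m]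
    (V W : Matrix m k ℝ) (hV : ∀ i, ∃ j, V i j ≠ 0) :
    let D := diagonal fun i => 1 / (2 * √(∑ j, V i j ^ 2))
    ∑ i, √(∑ j, W i j ^ 2) - trace (Wᵀ * D * W) ≤
      ∑ i, √(∑ j, V i j ^ 2) - trace (Vᵀ * D * V) := by
  simp only [trace_transpose_mul_diagonal_mul, one_div_mul_eq_div, ← Finset.sum_sub_distrib]
  refine Finset.sum_le_sum fun i _ => Real.sqrt_sub_div_two_mul_sqrt_le
    (Finset.sum_nonneg fun j _ => sq_nonneg _) ?_
  obtain ⟨j, hj⟩ := hV i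
  exact Finset.sum_pos' (fun j _ => sq_nonneg _) ⟨j, Finset.mem_univ j, by positivity⟩

theorem reweighted_descent_general {n d c : ℕ}
    (X : Matrix (Fin d) (Fin n) ℝ) (F : Matrix (Fin n) (Fin c) ℝ)
    (H : Matrix (Fin n) (Fin n) ℝ)
    (L : Matrix (Fin n) (Fin n) ℝ)
    (lam alpha : ℝ) (hlam : 0 < lam)
    (Wt Wt1 : Matrix (Fin d) (Fin c) ℝ)
    (hWt : ∀ i, ∃ j, Wt i j ≠ 0)
    (Dt : Matrix (Fin d) (Fin d) ℝ)
    (hDt : Dt = Matrix.diagonal fun i =>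
      1 / (2 * Real.sqrt (∑ j : Fin c, (Wt i j) ^ 2)))
    (hJ : (∑ i : Fin n, ∑ j : Fin c, ((H * (Xᵀ * Wt1 - F)) i j) ^ 2) +
            lam * Matrix.trace (Wt1ᵀ * Dt * Wt1) +
            alpha * Matrix.trace (Wt1ᵀ * (X * L * Xᵀ) * Wt1) ≤
          (∑ i : Fin n, ∑ j : Fin c, ((H * (Xᵀ * Wt - F)) i j) ^ 2) +
            lam * Matrix.trace (Wtᵀ * Dt * Wt) +
            alpha * Matrix.trace (Wtᵀ * (X * L * Xᵀ) * Wt)) :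
    (∑ i : Fin n, ∑ j : Fin c, ((H * (Xᵀ * Wt1 - F)) i j) ^ 2) +
        lam * (∑ i : Fin d, Real.sqrt (∑ j : Fin c, (Wt1 i j) ^ 2)) +
        alpha * Matrix.trace (Wt1ᵀ * (X * L * Xᵀ) * Wt1) ≤
      (∑ i : Fin n, ∑ j : Fin c, ((H * (Xᵀ * Wt - F)) i j) ^ 2) +
        lam * (∑ i : Fin d, Real.sqrt (∑ j : Fin c, (Wt i j) ^ 2)) +
        alpha * Matrix.trace (Wtᵀ * (X * L * Xᵀ) * Wt) := by
  have hgap := mul_le_mul_of_nonneg_left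
    (hDt ▸ sum_sqrt_sub_trace_reweighted_le Wt Wt1 hWt) hlam.le
  rw [mul_sub, mul_sub] at hgap
  linarith

/-- Descent of the iterative reweighted algorithm: if the surrogate objective
`J(W, D) = ‖H(XᵀW − F)‖_F² + λ Tr(WᵀDW) + α Tr(WᵀXLXᵀW)` satisfies
`J(W_{t+1}, D_t) ≤ J(W_t, D_t)` with `D_t = diag(1/(2‖w_t^i‖₂))`, then the
ℓ_{2,1}-regularized objective
`Φ(W) = ‖H(XᵀW − F)‖_F² + λ‖W‖_{2,1} + α Tr(WᵀXLXᵀW)` satisfies `Φ(W_{t+1}) ≤ Φ(W_t)`. -/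
theorem reweighted_descent {n d c : ℕ} (hn : 0 < n)
    (X : Matrix (Fin d) (Fin n) ℝ) (F : Matrix (Fin n) (Fin c) ℝ)
    (H : Matrix (Fin n) (Fin n) ℝ)
    (hH : H = 1 - (1 / (n : ℝ)) • (Matrix.of fun _ _ => (1 : ℝ)))
    (L : Matrix (Fin n) (Fin n) ℝ) (hL : L.PosSemidef)
    (lam alpha : ℝ) (hlam : 0 < lam) (halpha : 0 < alpha)
    (Wt Wt1 : Matrix (Fin d) (Fin c) ℝ)
    (hWt : ∀ i, ∃ j, Wt i j ≠ 0) (hWt1 : ∀ i, ∃ j, Wt1 i j ≠ 0)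
    (Dt : Matrix (Fin d) (Fin d) ℝ)
    (hDt : Dt = Matrix.diagonal fun i =>
      1 / (2 * Real.sqrt (∑ j : Fin c, (Wt i j) ^ 2)))
    (hJ : (∑ i : Fin n, ∑ j : Fin c, ((H * (Xᵀ * Wt1 - F)) i j) ^ 2) +
            lam * Matrix.trace (Wt1ᵀ * Dt * Wt1) +
            alpha * Matrix.trace (Wt1ᵀ * (X * L * Xᵀ) * Wt1) ≤
          (∑ i : Fin n, ∑ j : Fin c, ((H * (Xᵀ * Wt - F)) i j) ^ 2) +
            lam * Matrix.trace (Wtᵀ * Dt * Wt) +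
            alpha * Matrix.trace (Wtᵀ * (X * L * Xᵀ) * Wt)) :
    (∑ i : Fin n, ∑ j : Fin c, ((H * (Xᵀ * Wt1 - F)) i j) ^ 2) +
        lam * (∑ i : Fin d, Real.sqrt (∑ j : Fin c, (Wt1 i j) ^ 2)) +
        alpha * Matrix.trace (Wt1ᵀ * (X * L * Xᵀ) * Wt1) ≤
      (∑ i : Fin n, ∑ j : Fin c, ((H * (Xᵀ * Wt - F)) i j) ^ 2) +
        lam * (∑ i : Fin d, Real.sqrt (∑ j : Fin c, (Wt i j) ^ 2)) +
        alpha * Matrix.trace (Wtᵀ * (X * L * Xᵀ) * Wt) :=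
  reweighted_descent_general X F H L lam alpha hlam Wt Wt1 hWt Dt hDt hJ
end
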